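/- arXiv:2512.10599 — 2 statements merged into one kernel-verified Lean document; each statement's English description precedes it below -/
import Mathlib

section
/- For a sup-complete poset P (in particular, for a complete lattice), the space (P, υ(P)) with the upper topology is sober. -/
open Topology

/-- A nonempty subset of a topological space is irreducible if whenever it is
covered by a union of two closed sets, it is contained in one of them. -/
def IrredSet {Y : Type*} [TopologicalSpace Y] (A : Set Y) : Prop :=
  A.Nonempty ∧ ∀ F₁ F₂ : Set Y, IsClosed F₁ → IsClosed F₂ → A ⊆ F₁ ∪ F₂ →
    A ⊆ F₁ ∨ A ⊆ F₂

/-- A subset of a topological space is saturated if it equals the intersection of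
the open sets containing it. -/
def IsSaturatedSet {Y : Type*} [TopologicalSpace Y] (A : Set Y) : Prop :=
  A = ⋂₀ {U : Set Y | IsOpen U ∧ A ⊆ U}

/-!
The supremum `s` of an irreducible closed set `A` of the upper topology lies in `A`: otherwise
some basic neighbourhood of `s`, the complement of finitely many `↓b`, misses `A`, so the
irreducible set `A` lies in a single `↓b`, giving `s ≤ b`. Closed sets are lower sets, hence
`A = ↓s = closure {s}`, and the point is unique because the upper topology is T₀.
-/

open Set

theorem IsIrreducible.exists_subset_of_subset_biUnion {X ι : Type*} [TopologicalSpace X]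
    {s : Set X} (hs : IsIrreducible s) {t : Set ι} (ht : t.Finite) {f : ι → Set X}
    (hf : ∀ i ∈ t, IsClosed (f i)) (hst : s ⊆ ⋃ i ∈ t, f i) : ∃ i ∈ t, s ⊆ f i := by
  classical
  obtain ⟨z, hz, hsz⟩ := isIrreducible_iff_sUnion_isClosed.1 hs (ht.toFinset.image f)
    (by simpa using hf) (by simpa [sUnion_image] using hst)
  obtain ⟨i, hi, rfl⟩ := Finset.mem_image.1 hz
  exact ⟨i, ht.mem_toFinset.1 hi, hsz⟩

namespace Topology.IsUpper

variable {α : Type*} [TopologicalSpace α]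

theorem isLUB_mem_closure_of_isIrreducible [Preorder α] [IsUpper α] {s : Set α} {a : α}
    (hs : IsIrreducible s) (ha : IsLUB s a) : a ∈ closure s := by
  by_contra ha_not
  obtain ⟨_, ⟨t, ht, rfl⟩, hat, hts⟩ := IsUpper.isTopologicalBasis.exists_subset_of_mem_open
    ha_not isClosed_closure.isOpen_compl
  have hs_lower : s ⊆ ⋃ b ∈ t, Iic b := by
    rw [← coe_lowerClosure]
    exact fun x hx => not_not.1 fun hx' => hts hx' (subset_closure hx)
  obtain ⟨b, hbt, hsb⟩ := hs.exists_subset_of_subset_biUnion ht (fun _ _ => isClosed_Iic) hs_lower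
  exact hat ⟨b, hbt, ha.2 hsb⟩

theorem isGenericPoint_of_isLUB [PartialOrder α] [IsUpper α] {s : Set α} {a : α}
    (hs : IsIrreducible s) (hs_closed : IsClosed s) (ha : IsLUB s a) : IsGenericPoint a s := by
  have has : a ∈ s := hs_closed.closure_subset (isLUB_mem_closure_of_isIrreducible hs ha)
  rw [isGenericPoint_def, closure_singleton]
  exact Subset.antisymm (fun _ hx => isLowerSet_of_isClosed hs_closed hx has) ha.1

theorem quasiSober [PartialOrder α] [IsUpper α] (h : ∀ s : Set α, s.Nonempty → ∃ a, IsLUB s a) :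
    QuasiSober α where
  sober {_} hs hs_closed :=
    let ⟨_, ha⟩ := h _ hs.nonempty
    ⟨_, isGenericPoint_of_isLUB hs hs_closed ha⟩

end Topology.IsUpper

/-- For a sup-complete poset `P`, the space `(P, υ(P))` is sober. -/
theorem upper_sober_of_supComplete {P : Type*} [PartialOrder P]
    (hsup : ∀ A : Set P, A.Nonempty → ∃ s, IsLUB A s) :
    ∀ A : Set (WithUpper P), IrredSet A → IsClosed A → ∃! x, A = closure {x} := by
  have : QuasiSober (WithUpper P) := IsUpper.quasiSober hsup
  rintro A ⟨hne, hsplit⟩ hA_closed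
  have hA : IsIrreducible A := ⟨hne, isPreirreducible_iff_isClosed_union_isClosed.2 hsplit⟩
  have hgen := hA.isGenericPoint_genericPoint hA_closed
  exact ⟨_, hgen.def.symm, fun _ hx => (isGenericPoint_def.2 hx.symm).eq hgen⟩
end

section
/- For a sup-complete poset P, the space (P, υ(P)) with the upper topology is coherent: the intersection of any two compact saturated subsets is compact. -/
open Topology

/-! If an ultrafilter on `K₁ ∩ K₂` converges to `a ∈ K₁` and to `b ∈ K₂`, it also converges to
`a ⊔ b`: a subbasic open set `(Iic x)ᶜ` of the upper topology containing `a ⊔ b` contains `a` or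
`b`. Saturated sets are upper sets, so `a ⊔ b ∈ K₁ ∩ K₂`. -/

namespace Topology.IsUpper

variable {α : Type*} [Preorder α] [TopologicalSpace α] [IsUpper α]

lemma _root_.IsSaturatedSet.isUpperSet {K : Set α} (h : IsSaturatedSet K) : IsUpperSet K := by
  rw [h]
  exact isUpperSet_sInter fun U hU => isUpperSet_of_isOpen hU.1

lemma inf_nhds_le_nhds_of_isLUB {a b q : α} (hq : IsLUB {a, b} q) : 𝓝 a ⊓ 𝓝 b ≤ 𝓝 q := by
  have hq_nhds : 𝓝 q = ⨅ s ∈ {s | q ∈ s ∧ ∃ x, (Set.Iic x)ᶜ = s}, Filter.principal s := by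
    rw [topology_eq α]
    exact TopologicalSpace.nhds_generateFrom
  rw [hq_nhds]
  simp only [le_iInf_iff, Filter.le_principal_iff]
  rintro _ ⟨hqU, x, rfl⟩
  have hopen : IsOpen (Set.Iic x)ᶜ := isClosed_Iic.isOpen_compl
  have hx : ¬(a ≤ x ∧ b ≤ x) := fun h => hqU (hq.2 (by simpa [upperBounds_insert] using h))
  rcases not_and_or.1 hx with ha | hb
  · exact Filter.mem_inf_of_left (hopen.mem_nhds ha)
  · exact Filter.mem_inf_of_right (hopen.mem_nhds hb)

lemma isCompact_inter_of_isUpperSet (hsup : ∀ a b : α, ∃ q, IsLUB {a, b} q) {K₁ K₂ : Set α}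
    (h₁ : IsCompact K₁) (hu₁ : IsUpperSet K₁) (h₂ : IsCompact K₂) (hu₂ : IsUpperSet K₂) :
    IsCompact (K₁ ∩ K₂) := by
  rw [isCompact_iff_ultrafilter_le_nhds] at h₁ h₂ ⊢
  intro f hf
  obtain ⟨a, ha, hfa⟩ := h₁ f (hf.trans (Filter.principal_mono.2 Set.inter_subset_left))
  obtain ⟨b, hb, hfb⟩ := h₂ f (hf.trans (Filter.principal_mono.2 Set.inter_subset_right))
  obtain ⟨q, hq⟩ := hsup a b
  exact ⟨q, ⟨hu₁ (hq.1 (by simp)) ha, hu₂ (hq.1 (by simp)) hb⟩,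
    (le_inf hfa hfb).trans (inf_nhds_le_nhds_of_isLUB hq)⟩

end Topology.IsUpper

/-- For a sup-complete poset `P`, the space `(P, υ(P))` is coherent. -/
theorem upper_coherent_of_supComplete {P : Type*} [PartialOrder P]
    (hsup : ∀ A : Set P, A.Nonempty → ∃ s, IsLUB A s)
    (K₁ K₂ : Set (WithUpper P))
    (h₁ : IsCompact K₁) (hs₁ : IsSaturatedSet K₁)
    (h₂ : IsCompact K₂) (hs₂ : IsSaturatedSet K₂) :
    IsCompact (K₁ ∩ K₂) :=
  IsUpper.isCompact_inter_of_isUpperSet (α := WithUpper P)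
    (fun a b => hsup _ (Set.insert_nonempty a {b})) h₁ hs₁.isUpperSet h₂ hs₂.isUpperSet
end
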